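/- arXiv:1006.1460 — 2 statements merged into one kernel-verified Lean document; each statement's English description precedes it below -/
import Mathlib

section
/- Let α, β, γ be real numbers such that |α|, |β|, |γ| are pairwise distinct. Define Δ(α,β,γ) = sgn((α² − β²)(α² − γ²)(β² − γ²)). Then the function x ↦ Δ(α,β,γ) · L_{α,β,γ}(x) is strictly increasing on (0,+∞). -/
/-!
Since `cosh` is even, only `|α|, |β|, |γ|` matter. For `x < y` the two denominators of
`L(x)` and `L(y)` have the same sign, so `L(x) - L(y)` has the sign of the minor
`coshDet`. That minor is alternating in `(α, β, γ)`, and so is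
`(α² - β²)(α² - γ²)(β² - γ²)`; their product is symmetric, and it suffices to treat
`0 ≤ w < v < u`. There
`cosh (u x) - cosh (w x) = 2 sinh ((u + w) x / 2) sinh ((u - w) x / 2)` splits `L u v w`
into a product of two ratios `sinh (p x) / sinh (r x)` with `p > r > 0`, each of which
increases because `sinh t / t` does.
-/

open Real Set

/-- The function `L_{α,β,γ}` defined on `(0,+∞)`. -/
noncomputable def L (α β γ : ℝ) (x : ℝ) : ℝ :=
  (Real.cosh (α * x) - Real.cosh (γ * x)) / (Real.cosh (β * x) - Real.cosh (γ * x))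

namespace Real

theorem sinh_lt_mul_cosh {t : ℝ} (ht : 0 < t) : sinh t < t * cosh t := by
  have hmono : StrictMonoOn (fun s => s * cosh s - sinh s) (Ici 0) := by
    refine strictMonoOn_of_deriv_pos (convex_Ici 0) (by fun_prop) fun s hs => ?_
    rw [interior_Ici, mem_Ioi] at hs
    have hd : HasDerivAt (fun s => s * cosh s - sinh s) (1 * cosh s + s * sinh s - cosh s) s :=
      ((hasDerivAt_id s).mul (hasDerivAt_cosh s)).sub (hasDerivAt_sinh s)
    rw [hd.deriv]
    nlinarith [sinh_pos_iff.mpr hs]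
  have := hmono self_mem_Ici ht.le ht
  simp only [cosh_zero, sinh_zero, zero_mul, sub_zero] at this
  linarith

theorem strictMonoOn_sinh_div_self : StrictMonoOn (fun t => sinh t / t) (Ioi 0) := by
  refine strictMonoOn_of_deriv_pos (convex_Ioi 0)
    (continuous_sinh.continuousOn.div continuousOn_id fun t ht => ne_of_gt ht) fun t ht => ?_
  rw [interior_Ioi, mem_Ioi] at ht
  have hd : HasDerivAt (fun t => sinh t / t) ((cosh t * t - sinh t * 1) / t ^ 2) t :=
    (hasDerivAt_sinh t).div (hasDerivAt_id t) ht.ne'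
  rw [hd.deriv]
  have := sinh_lt_mul_cosh ht
  exact div_pos (by linarith) (by positivity)

theorem strictMonoOn_sinh_mul_div_sinh_mul {p r : ℝ} (hr : 0 < r) (hrp : r < p) :
    StrictMonoOn (fun x => sinh (p * x) / sinh (r * x)) (Ioi 0) := by
  refine strictMonoOn_of_deriv_pos (convex_Ioi 0)
    (ContinuousOn.div (by fun_prop) (by fun_prop) fun x hx =>
      (sinh_pos_iff.mpr (mul_pos hr hx)).ne') fun x hx => ?_
  rw [interior_Ioi, mem_Ioi] at hx
  have hrx : 0 < sinh (r * x) := sinh_pos_iff.mpr (mul_pos hr hx)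
  have hd : HasDerivAt (fun x => sinh (p * x) / sinh (r * x))
      ((cosh (p * x) * (p * 1) * sinh (r * x) - sinh (p * x) * (cosh (r * x) * (r * 1)))
        / sinh (r * x) ^ 2) x :=
    (((hasDerivAt_id x).const_mul p).sinh).div (((hasDerivAt_id x).const_mul r).sinh) hrx.ne'
  rw [hd.deriv]
  have hnum : cosh (p * x) * (p * 1) * sinh (r * x) - sinh (p * x) * (cosh (r * x) * (r * 1))
      = ((p - r) * sinh ((p + r) * x) - (p + r) * sinh ((p - r) * x)) / 2 := by
    rw [show (p + r) * x = p * x + r * x by ring, show (p - r) * x = p * x - r * x by ring,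
      sinh_add, sinh_sub]
    ring
  have hminus : 0 < (p - r) * x := mul_pos (sub_pos.mpr hrp) hx
  have hplus : 0 < (p + r) * x := mul_pos (by linarith) hx
  have hslope := strictMonoOn_sinh_div_self hminus hplus (by nlinarith)
  rw [div_lt_div_iff₀ hminus hplus] at hslope
  rw [hnum]
  refine div_pos (half_pos (pos_of_mul_pos_right (a := x) ?_ hx.le)) (by positivity)
  linarith

theorem cosh_sub_cosh (x y : ℝ) :
    cosh x - cosh y = 2 * sinh ((x + y) / 2) * sinh ((x - y) / 2) := by
  have h₁ := cosh_add ((x + y) / 2) ((x - y) / 2)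
  have h₂ := cosh_sub ((x + y) / 2) ((x - y) / 2)
  rw [show (x + y) / 2 + (x - y) / 2 = x by ring] at h₁
  rw [show (x + y) / 2 - (x - y) / 2 = y by ring] at h₂
  linarith

theorem cosh_abs_mul (a x : ℝ) : cosh (|a| * x) = cosh (a * x) := by
  rw [← cosh_abs, abs_mul, abs_abs, ← abs_mul, cosh_abs]

theorem cosh_mul_lt_cosh_mul_iff {a b x : ℝ} (hx : 0 < x) :
    cosh (a * x) < cosh (b * x) ↔ |a| < |b| := by
  rw [cosh_lt_cosh, abs_mul, abs_mul, abs_of_pos hx, mul_lt_mul_iff_of_pos_right hx]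

theorem sign_mul_neg_of_mul_neg {s t : ℝ} (h : s * t < 0) : sign s * t < 0 := by
  rcases lt_trichotomy s 0 with hs | rfl | hs
  · rw [sign_of_neg hs, neg_one_mul, neg_neg_iff_pos]
    exact pos_of_mul_neg_right h hs.le
  · simp at h
  · rw [sign_of_pos hs, one_mul]
    exact neg_of_mul_neg_right h hs.le

end Real

theorem L_eq_mul (u v w x : ℝ) :
    L u v w x = sinh ((u + w) / 2 * x) / sinh ((v + w) / 2 * x) *
      (sinh ((u - w) / 2 * x) / sinh ((v - w) / 2 * x)) := by
  have key : ∀ a b,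
      cosh (a * x) - cosh (b * x) = 2 * (sinh ((a + b) / 2 * x) * sinh ((a - b) / 2 * x)) :=
    fun a b => by rw [cosh_sub_cosh]; ring_nf
  rw [L, key, key, mul_div_mul_left _ _ two_ne_zero, mul_div_mul_comm]

theorem L_strictMonoOn_of_lt {u v w : ℝ} (hw : 0 ≤ w) (hwv : w < v) (hvu : v < u) :
    StrictMonoOn (L u v w) (Ioi 0) := by
  intro x hx y hy hxy
  have hr : 0 < (v + w) / 2 := by linarith
  have hs : 0 < (v - w) / 2 := by linarith
  have hsinh : ∀ {p}, 0 < p → 0 < sinh (p * x) := fun hp => sinh_pos_iff.mpr (mul_pos hp hx)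
  rw [L_eq_mul, L_eq_mul]
  exact mul_lt_mul''
    (strictMonoOn_sinh_mul_div_sinh_mul hr (by linarith) hx hy hxy)
    (strictMonoOn_sinh_mul_div_sinh_mul hs (by linarith) hx hy hxy)
    (div_pos (hsinh (by linarith)) (hsinh hr)).le (div_pos (hsinh (by linarith)) (hsinh hs)).le

/-- The determinant of the rows `(1, 1, 1)`, `(cosh (a x), cosh (b x), cosh (c x))` and
`(cosh (a y), cosh (b y), cosh (c y))`, hence alternating in `(a, b, c)`. -/
noncomputable def coshDet (a b c x y : ℝ) : ℝ :=
  (cosh (a * x) - cosh (c * x)) * (cosh (b * y) - cosh (c * y)) -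
    (cosh (b * x) - cosh (c * x)) * (cosh (a * y) - cosh (c * y))

theorem coshDet_abs (a b c x y : ℝ) : coshDet |a| |b| |c| x y = coshDet a b c x y := by
  simp only [coshDet, cosh_abs_mul]

theorem L_sub_L {a b c x y : ℝ} (hx : cosh (b * x) - cosh (c * x) ≠ 0)
    (hy : cosh (b * y) - cosh (c * y) ≠ 0) :
    L a b c x - L a b c y =
      coshDet a b c x y / ((cosh (b * x) - cosh (c * x)) * (cosh (b * y) - cosh (c * y))) :=
  div_sub_div _ _ hx hy

theorem cosh_sub_cosh_mul_pos {b c x y : ℝ} (hbc : |b| ≠ |c|) (hx : 0 < x) (hy : 0 < y) :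
    0 < (cosh (b * x) - cosh (c * x)) * (cosh (b * y) - cosh (c * y)) := by
  rcases hbc.lt_or_gt with h | h
  · exact mul_pos_of_neg_of_neg (sub_neg.mpr ((cosh_mul_lt_cosh_mul_iff hx).mpr h))
      (sub_neg.mpr ((cosh_mul_lt_cosh_mul_iff hy).mpr h))
  · exact mul_pos (sub_pos.mpr ((cosh_mul_lt_cosh_mul_iff hx).mpr h))
      (sub_pos.mpr ((cosh_mul_lt_cosh_mul_iff hy).mpr h))

theorem coshDet_neg_of_lt {u v w x y : ℝ} (hw : 0 ≤ w) (hwv : w < v) (hvu : v < u)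
    (hx : 0 < x) (hxy : x < y) : coshDet u v w x y < 0 := by
  have hvw : |v| ≠ |w| := by rw [abs_of_nonneg hw, abs_of_nonneg (by linarith)]; exact hwv.ne'
  have hden := cosh_sub_cosh_mul_pos hvw hx (hx.trans hxy)
  have hL := sub_neg.mpr (L_strictMonoOn_of_lt hw hwv hvu hx (mem_Ioi.mpr (hx.trans hxy)) hxy)
  rw [L_sub_L (left_ne_zero_of_mul hden.ne') (right_ne_zero_of_mul hden.ne')] at hL
  by_contra! h
  exact hL.not_ge (div_nonneg h hden.le)

theorem mul_coshDet_neg_of_nonneg {a b c x y : ℝ} (ha : 0 ≤ a) (hb : 0 ≤ b) (hc : 0 ≤ c)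
    (hab : a ≠ b) (hac : a ≠ c) (hbc : b ≠ c) (hx : 0 < x) (hxy : x < y) :
    (a ^ 2 - b ^ 2) * (a ^ 2 - c ^ 2) * (b ^ 2 - c ^ 2) * coshDet a b c x y < 0 := by
  have sorted : ∀ {u v w}, 0 ≤ w → w < v → v < u →
      (u ^ 2 - v ^ 2) * (u ^ 2 - w ^ 2) * (v ^ 2 - w ^ 2) * coshDet u v w x y < 0 :=
    fun hw hwv hvu => mul_neg_of_pos_of_neg
      (mul_pos (mul_pos (by nlinarith) (by nlinarith)) (by nlinarith))
      (coshDet_neg_of_lt hw hwv hvu hx hxy)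
  -- the product is symmetric in `(a, b, c)`, so each ordering is an instance of `sorted`
  unfold coshDet at *
  rcases hab.lt_or_gt with h₁ | h₁ <;> rcases hac.lt_or_gt with h₂ | h₂ <;>
    rcases hbc.lt_or_gt with h₃ | h₃
  · linarith [sorted ha h₁ h₃]
  · linarith [sorted ha h₂ h₃]
  · linarith
  · linarith [sorted hc h₂ h₁]
  · linarith [sorted hb h₁ h₂]
  · linarith
  · linarith [sorted hb h₃ h₂]
  · linarith [sorted hc h₃ h₁]

theorem mul_coshDet_neg {a b c x y : ℝ} (hab : |a| ≠ |b|) (hac : |a| ≠ |c|) (hbc : |b| ≠ |c|)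
    (hx : 0 < x) (hxy : x < y) :
    (a ^ 2 - b ^ 2) * (a ^ 2 - c ^ 2) * (b ^ 2 - c ^ 2) * coshDet a b c x y < 0 := by
  have := mul_coshDet_neg_of_nonneg (abs_nonneg a) (abs_nonneg b) (abs_nonneg c)
    hab hac hbc hx hxy
  rwa [sq_abs, sq_abs, sq_abs, coshDet_abs] at this

/-- For `|α|, |β|, |γ|` pairwise distinct, the function
`x ↦ sgn((α²−β²)(α²−γ²)(β²−γ²)) · L_{α,β,γ}(x)` is strictly increasing on `(0,+∞)`. -/
theorem sign_mul_L_strictMonoOn (α β γ : ℝ)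
    (hab : |α| ≠ |β|) (hag : |α| ≠ |γ|) (hbg : |β| ≠ |γ|) :
    StrictMonoOn
      (fun x => Real.sign ((α ^ 2 - β ^ 2) * (α ^ 2 - γ ^ 2) * (β ^ 2 - γ ^ 2)) * L α β γ x)
      (Set.Ioi 0) := by
  intro x hx y hy hxy
  have hden := cosh_sub_cosh_mul_pos hbg hx hy
  have hdet := sign_mul_neg_of_mul_neg (mul_coshDet_neg hab hag hbg hx hxy)
  rw [← sub_neg, ← mul_sub,
    L_sub_L (left_ne_zero_of_mul hden.ne') (right_ne_zero_of_mul hden.ne'), ← mul_div_assoc]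
  exact div_neg_of_neg_of_pos hdet hden
end

section
/- Let q > 0 be a real number, and for x > 0 and t > 1 let R_q(x,t) = (t−1)coth((t−1)x) − (q+1)tanh(x) + (q−t)tanh(tx). Let k and ℓ be real numbers with 1 < k < ℓ and such that either 0 < q ≤ 2, or q > 2 and k ≥ 1 + (3/4)(q−2). Then for every x > 0, R_q(x,ℓ) < R_q(x,k). -/
/-!
Fix `x > 0` and differentiate in `t`. With `u = (t - 1) x`, so that `t x = u + x`,
`∂ₜ R_q = coth u - u / sinh² u - tanh (u + x) + (q - t) x / cosh² (u + x)`.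
Writing `coth u - u / sinh² u = tanh u - (u cosh u - sinh u) / (sinh² u cosh u)` and
`tanh (u + x) = tanh u + sinh x / (cosh u cosh (u + x))`, the `tanh u` cancel, and the last
term is dominated by the two negative ones as soon as `(q - t) x ≤ u / 3 + x`, thanks to
`x < sinh x` and `u sinh² u ≤ 3 (u cosh u - sinh u) cosh u`. That condition reads
`3 q ≤ 4 t + 2`, which holds for all `t ≥ k` under either hypothesis on `q`.
-/

open Real Set

/-- The function `R_q(x,t)` defined for `x > 0`, `t > 1`. -/
noncomputable def Rq (q x t : ℝ) : ℝ :=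
  (t - 1) * (Real.cosh ((t - 1) * x) / Real.sinh ((t - 1) * x)) -
    (q + 1) * Real.tanh x + (q - t) * Real.tanh (t * x)

theorem nonneg_of_hasDerivAt_of_map_zero {f f' : ℝ → ℝ} (hf : ∀ w, HasDerivAt f (f' w) w)
    (hf0 : f 0 = 0) (hf' : ∀ w, 0 < w → 0 ≤ f' w) {u : ℝ} (hu : 0 ≤ u) : 0 ≤ f u := by
  have hmono : MonotoneOn f (Ici 0) :=
    monotoneOn_of_hasDerivWithinAt_nonneg (convex_Ici 0)
      (fun w _ => (hf w).continuousAt.continuousWithinAt)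
      (fun w _ => (hf w).hasDerivWithinAt) (by rw [interior_Ici]; exact hf')
  simpa only [hf0] using hmono self_mem_Ici hu hu

namespace Real

theorem sinh_le_mul_cosh {u : ℝ} (hu : 0 ≤ u) : sinh u ≤ u * cosh u := by
  have key := nonneg_of_hasDerivAt_of_map_zero (f := fun w => w * cosh w - sinh w)
    (f' := fun w => w * sinh w)
    (fun w => (((hasDerivAt_id' w).fun_mul (hasDerivAt_cosh w)).fun_sub
      (hasDerivAt_sinh w)).congr_deriv (by ring))
    (by simp) (fun w hw => mul_nonneg hw.le (sinh_nonneg_iff.2 hw.le)) hu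
  simpa only [sub_nonneg] using key

theorem mul_sinh_sq_le {u : ℝ} (hu : 0 ≤ u) :
    u * sinh u ^ 2 ≤ 3 * (u * cosh u - sinh u) * cosh u := by
  have key := nonneg_of_hasDerivAt_of_map_zero
    (f := fun w => 3 * (w * cosh w - sinh w) * cosh w - w * sinh w ^ 2)
    (f' := fun w => 4 * sinh w * (w * cosh w - sinh w))
    (fun w => by
      have hg := ((hasDerivAt_id' w).fun_mul (hasDerivAt_cosh w)).fun_sub (hasDerivAt_sinh w)
      exact (((hg.const_mul 3).fun_mul (hasDerivAt_cosh w)).fun_sub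
        ((hasDerivAt_id' w).fun_mul ((hasDerivAt_sinh w).fun_pow 2))).congr_deriv (by ring))
    (by simp)
    (fun w hw => mul_nonneg (by linarith [sinh_nonneg_iff.2 hw.le])
      (sub_nonneg.2 (sinh_le_mul_cosh hw.le))) hu
  simpa only [sub_nonneg] using key

theorem hasDerivAt_cosh_div_sinh {y : ℝ} (hy : y ≠ 0) :
    HasDerivAt (fun y => cosh y / sinh y) (-1 / sinh y ^ 2) y :=
  ((hasDerivAt_cosh y).div (hasDerivAt_sinh y) (sinh_ne_zero.2 hy)).congr_deriv
    (by rw [← cosh_sq_sub_sinh_sq y]; ring)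

theorem hasDerivAt_tanh (y : ℝ) : HasDerivAt tanh (1 / cosh y ^ 2) y := by
  rw [show tanh = sinh / cosh from funext tanh_eq_sinh_div_cosh]
  exact ((hasDerivAt_sinh y).div (hasDerivAt_cosh y) (cosh_pos y).ne').congr_deriv
    (by rw [← cosh_sq_sub_sinh_sq y]; ring)

theorem cosh_div_sinh_sub_div_sinh_sq {u : ℝ} (hu : u ≠ 0) :
    cosh u / sinh u - u / sinh u ^ 2 = tanh u - (u * cosh u - sinh u) / (sinh u ^ 2 * cosh u) := by
  have hs : sinh u ≠ 0 := sinh_ne_zero.2 hu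
  have hc : cosh u ≠ 0 := (cosh_pos u).ne'
  rw [tanh_eq_sinh_div_cosh]
  field_simp
  linear_combination sinh u * cosh_sq_sub_sinh_sq u

theorem tanh_add_eq (u x : ℝ) :
    tanh (u + x) = tanh u + sinh x / (cosh u * cosh (u + x)) := by
  have hc : cosh u ≠ 0 := (cosh_pos u).ne'
  have hc' : cosh (u + x) ≠ 0 := (cosh_pos (u + x)).ne'
  rw [tanh_eq_sinh_div_cosh, tanh_eq_sinh_div_cosh]
  field_simp
  rw [sinh_add, cosh_add]
  linear_combination sinh x * cosh_sq_sub_sinh_sq u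

theorem cosh_le_cosh_add {u x : ℝ} (hu : 0 ≤ u) (hx : 0 ≤ x) : cosh u ≤ cosh (u + x) :=
  cosh_le_cosh.2 (by rw [abs_of_nonneg hu, abs_of_nonneg (by linarith)]; linarith)

theorem div_cosh_add_sq_lt {u x : ℝ} (hu : 0 ≤ u) (hx : 0 < x) :
    x / cosh (u + x) ^ 2 < sinh x / (cosh u * cosh (u + x)) := by
  have hc := cosh_le_cosh_add hu hx.le
  have hpos := cosh_pos u
  rw [div_lt_div_iff₀ (by positivity) (by positivity)]
  calc x * (cosh u * cosh (u + x)) ≤ x * cosh (u + x) ^ 2 := by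
        rw [sq, ← mul_assoc, ← mul_assoc]; gcongr
    _ < sinh x * cosh (u + x) ^ 2 := by
        gcongr
        exact self_lt_sinh_iff.2 hx

theorem div_three_mul_cosh_add_sq_le {u x : ℝ} (hu : 0 < u) (hx : 0 ≤ x) :
    u / (3 * cosh (u + x) ^ 2) ≤ (u * cosh u - sinh u) / (sinh u ^ 2 * cosh u) := by
  have hc := cosh_le_cosh_add hu.le hx
  have hpos := cosh_pos u
  have hs : 0 < sinh u := sinh_pos_iff.2 hu
  have hA : 0 ≤ u * cosh u - sinh u := sub_nonneg.2 (sinh_le_mul_cosh hu.le)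
  rw [div_le_div_iff₀ (by positivity) (by positivity)]
  calc u * (sinh u ^ 2 * cosh u) ≤ 3 * (u * cosh u - sinh u) * cosh u * cosh u := by
        rw [← mul_assoc]; exact mul_le_mul_of_nonneg_right (mul_sinh_sq_le hu.le) hpos.le
    _ ≤ (u * cosh u - sinh u) * (3 * cosh (u + x) ^ 2) := by
        have : cosh u * cosh u ≤ cosh (u + x) ^ 2 := by rw [sq]; gcongr
        nlinarith

end Real

noncomputable def RqDeriv (q x t : ℝ) : ℝ :=
  cosh ((t - 1) * x) / sinh ((t - 1) * x) - (t - 1) * x / sinh ((t - 1) * x) ^ 2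
    - tanh (t * x) + (q - t) * x / cosh (t * x) ^ 2

theorem hasDerivAt_Rq {q x t : ℝ} (h : (t - 1) * x ≠ 0) :
    HasDerivAt (Rq q x) (RqDeriv q x t) t := by
  have hcoth := (hasDerivAt_cosh_div_sinh h).comp t
    (((hasDerivAt_id' t).sub_const 1).mul_const x)
  have htanh := (hasDerivAt_tanh (t * x)).comp t ((hasDerivAt_id' t).mul_const x)
  refine (((((hasDerivAt_id' t).sub_const 1).fun_mul hcoth).sub_const ((q + 1) * tanh x)).fun_add
    (((hasDerivAt_const t q).fun_sub (hasDerivAt_id' t)).fun_mul htanh)).congr_deriv ?_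
  simp only [RqDeriv, Function.comp_apply]
  ring

theorem RqDeriv_neg {q x t : ℝ} (hx : 0 < x) (ht : 1 < t) (hqt : 3 * q ≤ 4 * t + 2) :
    RqDeriv q x t < 0 := by
  set u := (t - 1) * x with hu_def
  have hu : 0 < u := mul_pos (by linarith) hx
  have htx : t * x = u + x := by rw [hu_def]; ring
  have hqx : (q - t) * x ≤ u / 3 + x := by
    rw [hu_def]; nlinarith
  have hlast : (q - t) * x / cosh (u + x) ^ 2
      ≤ u / (3 * cosh (u + x) ^ 2) + x / cosh (u + x) ^ 2 := by
    rw [div_mul_eq_div_div, ← add_div]; gcongr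
  rw [RqDeriv, ← hu_def, htx, cosh_div_sinh_sub_div_sinh_sq hu.ne', tanh_add_eq]
  linarith [div_three_mul_cosh_add_sq_le hu hx.le, div_cosh_add_sq_lt hu.le hx]

theorem Rq_strictAntiOn {q x k : ℝ} (hx : 0 < x) (hk : 1 < k) (hqk : 3 * q ≤ 4 * k + 2) :
    StrictAntiOn (Rq q x) (Ici k) := by
  have hderiv : ∀ t ∈ Ici k, HasDerivAt (Rq q x) (RqDeriv q x t) t := fun t ht =>
    hasDerivAt_Rq (mul_pos (by linarith [mem_Ici.1 ht]) hx).ne'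
  refine strictAntiOn_of_hasDerivWithinAt_neg (f' := RqDeriv q x) (convex_Ici k)
    (fun t ht => (hderiv t ht).continuousAt.continuousWithinAt) (fun t ht => ?_) (fun t ht => ?_)
  all_goals rw [interior_Ici] at ht
  · exact (hderiv t (mem_Ici_of_Ioi ht)).hasDerivWithinAt
  · exact RqDeriv_neg hx (by linarith [mem_Ioi.1 ht]) (by linarith [mem_Ioi.1 ht])

theorem Rq_lt_general (q k ℓ : ℝ) (hk : 1 < k) (hkl : k < ℓ)
    (h : q ≤ 2 ∨ (2 < q ∧ 1 + 3 / 4 * (q - 2) ≤ k)) :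
    ∀ x : ℝ, 0 < x → Rq q x ℓ < Rq q x k := by
  intro x hx
  have hqk : 3 * q ≤ 4 * k + 2 := by
    rcases h with hq | ⟨-, hkq⟩ <;> linarith
  exact Rq_strictAntiOn hx hk hqk self_mem_Ici hkl.le hkl

/-- If `1 < k < ℓ` and either `0 < q ≤ 2`, or `q > 2` and `k ≥ 1 + (3/4)(q−2)`,
then `R_q(x,ℓ) < R_q(x,k)` for every `x > 0`. -/
theorem Rq_lt (q k ℓ : ℝ) (hq : 0 < q) (hk : 1 < k) (hkl : k < ℓ)
    (h : q ≤ 2 ∨ (2 < q ∧ 1 + 3 / 4 * (q - 2) ≤ k)) :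
    ∀ x : ℝ, 0 < x → Rq q x ℓ < Rq q x k :=
  Rq_lt_general q k ℓ hk hkl h
end
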